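/- (Theorem 1.) Let κ ≥ 1, p ≥ 2, n ≥ 1, C₀ > 0, ε ∈ [0,1], and let Σ* be a real symmetric p×p matrix with Σ* ∈ D_κ whose set of nonzero off-diagonal entries has cardinality at most s. Let (Ω, 𝔉, P) be a probability space and Σ̃ : Ω → (real symmetric p×p matrices) a measurable map (the pilot estimator) satisfying P( max_{i,j} |Σ̃_{ij} − Σ*_{ij}| ≤ C₀·sqrt(log p / n) ) ≥ 1 − ε. Set λ = C₀·sqrt(log p / n) and for each ω let Σ̂(ω) be the unique minimizer over D_κ of (1/2)‖Σ − Σ̃(ω)‖_F² + λ‖Σ‖_{1,off}. Then P( ‖Σ̂ − Σ*‖_F ≤ 6·C₀·sqrt((s + p)·log p / n) ) ≥ 1 − ε. -/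

import Mathlib

open Matrix BigOperators MeasureTheory

/-- Frobenius norm of a real matrix. -/
noncomputable def frobNorm {p : ℕ} (A : Matrix (Fin p) (Fin p) ℝ) : ℝ :=
  Real.sqrt (∑ i, ∑ j, (A i j) ^ 2)

/-- Off-diagonal ℓ1 norm of a real matrix. -/
noncomputable def offL1 {p : ℕ} (A : Matrix (Fin p) (Fin p) ℝ) : ℝ :=
  ∑ i, ∑ j, if i ≠ j then |A i j| else 0

/-- The set `D_κ` of real symmetric positive semidefinite `p × p` matrices whose largest
eigenvalue is at most `κ` times their smallest eigenvalue. -/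
noncomputable def Dset (κ : ℝ) (p : ℕ) : Set (Matrix (Fin p) (Fin p) ℝ) :=
  {A | ∃ h : A.PosSemidef, (⨆ i, h.1.eigenvalues i) ≤ κ * (⨅ i, h.1.eigenvalues i)}

/-!
Write `Δ = Σ̂ - Σ*` and `E = Σ̃ - Σ*`. Comparing the objective at `Σ̂` with its value at the
feasible point `Σ*` gives the basic inequality
`‖Δ‖_F² / 2 ≤ ⟪Δ, E⟫ + λ (‖Σ*‖_{1,off} - ‖Σ̂‖_{1,off})`.
On the event `max |E_ij| ≤ λ` the cross term is at most `λ ‖Δ‖₁`, and since `Σ*` vanishes off its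
support `T`, the penalty difference is at most `λ (‖Δ_T‖₁ - ‖Δ_{offdiag \ T}‖₁)`. The off-support
entries cancel, leaving `‖Δ‖_F² / 2 ≤ λ (‖Δ_diag‖₁ + 2 ‖Δ_T‖₁) ≤ λ (√p + 2 √s) ‖Δ‖_F` by
Cauchy–Schwarz, whence `‖Δ‖_F ≤ 6 λ √(s + p)`.
-/

open Finset

theorem sum_abs_le_sqrt_card_mul_sqrt_sum_sq {α : Type*} [Fintype α] (f : α → ℝ) (U : Finset α) :
    ∑ q ∈ U, |f q| ≤ √(#U) * √(∑ q, f q ^ 2) := by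
  rw [← Real.sqrt_mul (by positivity), Real.le_sqrt (by positivity) (by positivity)]
  calc (∑ q ∈ U, |f q|) ^ 2 ≤ #U * ∑ q ∈ U, |f q| ^ 2 := sq_sum_le_card_mul_sum_sq
    _ ≤ #U * ∑ q, f q ^ 2 := by
      simp only [sq_abs]
      gcongr
      exact subset_univ U

theorem sum_abs_sub_sum_abs_le {α : Type*} [DecidableEq α] {f g : α → ℝ} {T O : Finset α}
    (hTO : T ⊆ O) (hf : ∀ q ∈ O \ T, f q = 0) :
    ∑ q ∈ O, |f q| - ∑ q ∈ O, |g q| ≤ ∑ q ∈ T, |g q - f q| - ∑ q ∈ O \ T, |g q - f q| := by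
  have hf_off : ∑ q ∈ O \ T, |f q| = 0 := sum_eq_zero fun q hq => by simp [hf q hq]
  have hgf_off : ∑ q ∈ O \ T, |g q - f q| = ∑ q ∈ O \ T, |g q| :=
    sum_congr rfl fun q hq => by simp [hf q hq]
  have h_on : ∑ q ∈ T, |f q| - ∑ q ∈ T, |g q| ≤ ∑ q ∈ T, |g q - f q| := by
    rw [← sum_sub_distrib]
    exact sum_le_sum fun q _ => abs_sub_comm (g q) (f q) ▸ abs_sub_abs_le_abs_sub (f q) (g q)
  rw [← sum_sdiff hTO (f := fun q => |f q|), ← sum_sdiff hTO (f := fun q => |g q|)]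
  linarith

theorem sum_univ_prod_eq_sum_diag_add_sum_offDiag {α M : Type*} [Fintype α] [DecidableEq α]
    [AddCommMonoid M] (f : α × α → M) :
    ∑ q, f q = ∑ q ∈ univ.diag, f q + ∑ q ∈ univ.offDiag, f q := by
  rw [← sum_union (disjoint_diag_offDiag univ), diag_union_offDiag, univ_product_univ]

section Matrix

variable {p : ℕ}

theorem frobNorm_eq_sqrt (A : Matrix (Fin p) (Fin p) ℝ) :
    frobNorm A = √(∑ q : Fin p × Fin p, A q.1 q.2 ^ 2) := by
  rw [frobNorm, ← sum_product' univ univ fun i j => A i j ^ 2, univ_product_univ]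

theorem frobNorm_sq (A : Matrix (Fin p) (Fin p) ℝ) :
    frobNorm A ^ 2 = ∑ q : Fin p × Fin p, A q.1 q.2 ^ 2 := by
  rw [frobNorm_eq_sqrt, Real.sq_sqrt (by positivity)]

theorem frobNorm_sub_sq (A B : Matrix (Fin p) (Fin p) ℝ) :
    frobNorm (A - B) ^ 2 =
      frobNorm A ^ 2 - 2 * ∑ q : Fin p × Fin p, A q.1 q.2 * B q.1 q.2 + frobNorm B ^ 2 := by
  simp only [frobNorm_sq, Matrix.sub_apply]
  rw [mul_sum, ← sum_sub_distrib, ← sum_add_distrib]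
  exact sum_congr rfl fun q _ => by ring

theorem offL1_eq_sum_offDiag (A : Matrix (Fin p) (Fin p) ℝ) :
    offL1 A = ∑ q ∈ univ.offDiag, |A q.1 q.2| := by
  rw [offL1, ← sum_product' univ univ, ← sum_filter]
  congr 1
  ext q
  simp

noncomputable def offDiagSupport (A : Matrix (Fin p) (Fin p) ℝ) : Finset (Fin p × Fin p) :=
  {q ∈ univ.offDiag | A q.1 q.2 ≠ 0}

theorem offDiagSupport_subset (A : Matrix (Fin p) (Fin p) ℝ) :
    offDiagSupport A ⊆ univ.offDiag :=
  filter_subset _ _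

theorem card_offDiagSupport (A : Matrix (Fin p) (Fin p) ℝ) :
    #(offDiagSupport A) = Set.ncard {ij : Fin p × Fin p | ij.1 ≠ ij.2 ∧ A ij.1 ij.2 ≠ 0} := by
  rw [← Set.ncard_coe_finset]
  congr 1
  ext q
  simp [offDiagSupport]

theorem offL1_sub_offL1_le (A B : Matrix (Fin p) (Fin p) ℝ) :
    offL1 A - offL1 B ≤ ∑ q ∈ offDiagSupport A, |(B - A) q.1 q.2| -
      ∑ q ∈ univ.offDiag \ offDiagSupport A, |(B - A) q.1 q.2| := by
  rw [offL1_eq_sum_offDiag, offL1_eq_sum_offDiag]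
  refine sum_abs_sub_sum_abs_le (offDiagSupport_subset A) fun q hq => ?_
  simp only [offDiagSupport, mem_sdiff, mem_filter, mem_offDiag] at hq
  exact not_not.mp fun h => hq.2 ⟨hq.1, h⟩

theorem sum_abs_le_sqrt_card_mul_frobNorm (A : Matrix (Fin p) (Fin p) ℝ)
    (U : Finset (Fin p × Fin p)) : ∑ q ∈ U, |A q.1 q.2| ≤ √(#U) * frobNorm A :=
  frobNorm_eq_sqrt A ▸ sum_abs_le_sqrt_card_mul_sqrt_sum_sq (fun q => A q.1 q.2) U

theorem sum_abs_add_offL1_sub_offL1_le (A B : Matrix (Fin p) (Fin p) ℝ) :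
    ∑ q : Fin p × Fin p, |(B - A) q.1 q.2| + (offL1 A - offL1 B) ≤
      ∑ q ∈ univ.diag, |(B - A) q.1 q.2| + 2 * ∑ q ∈ offDiagSupport A, |(B - A) q.1 q.2| := by
  rw [sum_univ_prod_eq_sum_diag_add_sum_offDiag, ← sum_sdiff (offDiagSupport_subset A)]
  linarith [offL1_sub_offL1_le A B]

theorem half_frobNorm_sub_sq_le {lam : ℝ} {Sstar Stil Shat : Matrix (Fin p) (Fin p) ℝ}
    (hmin : (1 / 2) * (frobNorm (Shat - Stil)) ^ 2 + lam * offL1 Shat ≤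
        (1 / 2) * (frobNorm (Sstar - Stil)) ^ 2 + lam * offL1 Sstar) :
    frobNorm (Shat - Sstar) ^ 2 / 2 ≤
      ∑ q : Fin p × Fin p, (Shat - Sstar) q.1 q.2 * (Stil - Sstar) q.1 q.2 +
        lam * (offL1 Sstar - offL1 Shat) := by
  have hΔE : Shat - Stil = (Shat - Sstar) - (Stil - Sstar) := (sub_sub_sub_cancel_right _ _ _).symm
  have hE : Sstar - Stil = 0 - (Stil - Sstar) := by rw [zero_sub, neg_sub]
  have hzero : frobNorm (0 : Matrix (Fin p) (Fin p) ℝ) = 0 := by simp [frobNorm]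
  rw [hΔE, hE, frobNorm_sub_sq (Shat - Sstar), frobNorm_sub_sq 0] at hmin
  simp only [hzero, Matrix.zero_apply, zero_mul, sum_const_zero] at hmin
  linarith

theorem frobNorm_sub_le_of_abs_sub_le {s : ℕ} {lam : ℝ} (hlam : 0 ≤ lam)
    {Sstar Stil Shat : Matrix (Fin p) (Fin p) ℝ}
    (hsparse : Set.ncard {ij : Fin p × Fin p | ij.1 ≠ ij.2 ∧ Sstar ij.1 ij.2 ≠ 0} ≤ s)
    (hE : ∀ i j, |Stil i j - Sstar i j| ≤ lam)
    (hmin : (1 / 2) * (frobNorm (Shat - Stil)) ^ 2 + lam * offL1 Shat ≤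
        (1 / 2) * (frobNorm (Sstar - Stil)) ^ 2 + lam * offL1 Sstar) :
    frobNorm (Shat - Sstar) ≤ 6 * lam * √(s + p) := by
  set Δ := Shat - Sstar
  set F := frobNorm Δ
  have hcross : ∑ q : Fin p × Fin p, Δ q.1 q.2 * (Stil - Sstar) q.1 q.2 ≤
      lam * ∑ q : Fin p × Fin p, |Δ q.1 q.2| := by
    rw [mul_comm, sum_mul]
    exact sum_le_sum fun q _ => (le_abs_self _).trans <| (abs_mul _ _).trans_le <|
      mul_le_mul_of_nonneg_left (hE q.1 q.2) (abs_nonneg _)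
  have hF0 : 0 ≤ F := Real.sqrt_nonneg _
  have hdiag : ∑ q ∈ univ.diag, |Δ q.1 q.2| ≤ √p * F := by
    simpa using sum_abs_le_sqrt_card_mul_frobNorm Δ univ.diag
  have hsupp : ∑ q ∈ offDiagSupport Sstar, |Δ q.1 q.2| ≤ √s * F := by
    have hT : (#(offDiagSupport Sstar) : ℝ) ≤ s := by
      exact_mod_cast (card_offDiagSupport Sstar).trans_le hsparse
    exact (sum_abs_le_sqrt_card_mul_frobNorm Δ _).trans
      (mul_le_mul_of_nonneg_right (Real.sqrt_le_sqrt hT) hF0)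
  have hroot : √p + 2 * √s ≤ 3 * √(s + p) := by
    have hp : √(p : ℝ) ≤ √(s + p) := Real.sqrt_le_sqrt (by simp)
    have hs : √(s : ℝ) ≤ √(s + p) := Real.sqrt_le_sqrt (by simp)
    linarith
  have hF : F ^ 2 / 2 ≤ lam * (3 * √(s + p)) * F := calc
    F ^ 2 / 2 ≤ lam * (∑ q ∈ univ.diag, |Δ q.1 q.2| +
        2 * ∑ q ∈ offDiagSupport Sstar, |Δ q.1 q.2|) := by
      have := mul_le_mul_of_nonneg_left (sum_abs_add_offL1_sub_offL1_le Sstar Shat) hlam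
      linarith [half_frobNorm_sub_sq_le hmin]
    _ ≤ lam * ((√p + 2 * √s) * F) := by gcongr; linarith
    _ ≤ lam * (3 * √(s + p)) * F := by rw [← mul_assoc]; gcongr
  nlinarith [mul_nonneg hlam (Real.sqrt_nonneg (s + p))]

end Matrix

theorem stmt3_general (p s n : ℕ) (κ C₀ ε : ℝ)
    (hC₀ : 0 < C₀)
    (Sstar : Matrix (Fin p) (Fin p) ℝ)
    (hSstarD : Sstar ∈ Dset κ p)
    (hsparse : Set.ncard {ij : Fin p × Fin p | ij.1 ≠ ij.2 ∧ Sstar ij.1 ij.2 ≠ 0} ≤ s)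
    (Ω : Type*) [MeasurableSpace Ω] (P : Measure Ω)
    (Stilde : Ω → Matrix (Fin p) (Fin p) ℝ)
    (hconc : ENNReal.ofReal (1 - ε) ≤
      P {ω | ∀ i j, |Stilde ω i j - Sstar i j| ≤ C₀ * Real.sqrt (Real.log p / n)})
    (lam : ℝ) (hlam : lam = C₀ * Real.sqrt (Real.log p / n))
    (Shat : Ω → Matrix (Fin p) (Fin p) ℝ)
    (hShatMin : ∀ ω, ∀ S ∈ Dset κ p,
      (1 / 2) * (frobNorm (Shat ω - Stilde ω)) ^ 2 + lam * offL1 (Shat ω) ≤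
        (1 / 2) * (frobNorm (S - Stilde ω)) ^ 2 + lam * offL1 S) :
    ENNReal.ofReal (1 - ε) ≤
      P {ω | frobNorm (Shat ω - Sstar) ≤
        6 * C₀ * Real.sqrt ((s + p) * Real.log p / n)} := by
  have hlam0 : 0 ≤ lam := hlam ▸ by positivity
  have hrate : 6 * lam * √(s + p) = 6 * C₀ * √((s + p) * Real.log p / n) := by
    rw [hlam, mul_div_assoc, Real.sqrt_mul (by positivity)]
    ring
  refine hconc.trans (measure_mono fun ω hω => ?_)
  rw [Set.mem_ofPred_eq, ← hrate]
  exact frobNorm_sub_le_of_abs_sub_le hlam0 hsparse (hlam ▸ hω) (hShatMin ω Sstar hSstarD)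

/-- Theorem 1: with probability at least `1 − ε` (the probability with which the pilot
estimator satisfies the entrywise concentration bound), the RWS estimator with
`λ = C₀ √(log p / n)` satisfies `‖Σ̂ − Σ*‖_F ≤ 6 C₀ √((s+p) log p / n)`. -/
theorem stmt3 (p s n : ℕ) (hp : 2 ≤ p) (hn : 1 ≤ n) (κ C₀ ε : ℝ) (hκ : 1 ≤ κ)
    (hC₀ : 0 < C₀) (hε0 : 0 ≤ ε) (hε1 : ε ≤ 1)
    (Sstar : Matrix (Fin p) (Fin p) ℝ)
    (hSstarSym : Sstar.IsHermitian) (hSstarD : Sstar ∈ Dset κ p)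
    (hsparse : Set.ncard {ij : Fin p × Fin p | ij.1 ≠ ij.2 ∧ Sstar ij.1 ij.2 ≠ 0} ≤ s)
    (Ω : Type*) [MeasurableSpace Ω] (P : Measure Ω) [IsProbabilityMeasure P]
    (Stilde : Ω → Matrix (Fin p) (Fin p) ℝ)
    (hStildeSym : ∀ ω, (Stilde ω).IsHermitian)
    (hStildeMeas : ∀ i j, Measurable fun ω => Stilde ω i j)
    (hconc : ENNReal.ofReal (1 - ε) ≤
      P {ω | ∀ i j, |Stilde ω i j - Sstar i j| ≤ C₀ * Real.sqrt (Real.log p / n)})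
    (lam : ℝ) (hlam : lam = C₀ * Real.sqrt (Real.log p / n))
    (Shat : Ω → Matrix (Fin p) (Fin p) ℝ)
    (hShatMem : ∀ ω, Shat ω ∈ Dset κ p)
    (hShatMin : ∀ ω, ∀ S ∈ Dset κ p,
      (1 / 2) * (frobNorm (Shat ω - Stilde ω)) ^ 2 + lam * offL1 (Shat ω) ≤
        (1 / 2) * (frobNorm (S - Stilde ω)) ^ 2 + lam * offL1 S)
    (hShatUnique : ∀ ω, ∀ S ∈ Dset κ p,
      (∀ S' ∈ Dset κ p,
        (1 / 2) * (frobNorm (S - Stilde ω)) ^ 2 + lam * offL1 S ≤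
          (1 / 2) * (frobNorm (S' - Stilde ω)) ^ 2 + lam * offL1 S') → S = Shat ω) :
    ENNReal.ofReal (1 - ε) ≤
      P {ω | frobNorm (Shat ω - Sstar) ≤
        6 * C₀ * Real.sqrt ((s + p) * Real.log p / n)} :=
  stmt3_general p s n κ C₀ ε hC₀ Sstar hSstarD hsparse Ω P Stilde hconc lam hlam Shat hShatMin
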